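/- arXiv:1106.5527 — 3 statements merged into one kernel-verified Lean document; each statement's English description precedes it below -/
import Mathlib

section
/- Let ρ : ℝ² → [0,∞) be measurable with ρ(x) ≤ A + B·ln_−|x−ξ| for all x, where A, B ≥ 0 and ξ ∈ ℝ². Then for every x ∈ ℝ² and δ ∈ (0,1), ∫_{|x−y| ≤ δ} ρ(y)/|x−y| dy ≤ C(A δ + B δ(1 + |ln δ|)) for an absolute constant C. -/
/-!
Split according to which centre `y` is closer to. If `‖y - ξ‖ ≥ ‖y - x‖`, then
`lnm ‖y - ξ‖ ≤ lnm ‖y - x‖` and the integrand is dominated by the radial function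
`(A + B lnm r) / r` about `x`. Otherwise `‖y - ξ‖ < ‖y - x‖ ≤ δ`, and `lnm ‖y - ξ‖ / ‖y - x‖`
is dominated by the radial function `lnm r / r` about `ξ`, cut off at `r = δ`. In polar coordinates
in the plane, the area element `r dr` cancels the `1 / r`. What is left is
`∫₀^δ (A + B lnm r) dr = A δ + B δ (1 + |log δ|)`.
-/

open MeasureTheory

noncomputable def lnm (r : ℝ) : ℝ := max (-Real.log r) 0

open Measure Set Metric
open scoped ENNReal

@[fun_prop]
lemma measurable_lnm : Measurable lnm := Real.measurable_log.neg.max measurable_const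

lemma lnm_nonneg (r : ℝ) : 0 ≤ lnm r := le_max_right _ _

lemma lnm_le_lnm {a b : ℝ} (ha : 0 < a) (hab : a ≤ b) : lnm b ≤ lnm a :=
  max_le_max (neg_le_neg (Real.log_le_log ha hab)) le_rfl

lemma lnm_eq_neg_log {r : ℝ} (h0 : 0 ≤ r) (h1 : r ≤ 1) : lnm r = -Real.log r :=
  max_eq_left (neg_nonneg.mpr (Real.log_nonpos h0 h1))

lemma lnm_div_le_add_indicator {a b δ : ℝ} (ha : 0 < a) (haδ : a ≤ δ) (hb : 0 ≤ b) :
    lnm b / a ≤ lnm a / a + (Iic δ).indicator (fun r => lnm r / r) b := by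
  rcases le_or_gt a b with hab | hba
  · refine le_add_of_le_of_nonneg (div_le_div_of_nonneg_right (lnm_le_lnm ha hab) ha.le) ?_
    exact indicator_apply_nonneg fun _ => div_nonneg (lnm_nonneg b) hb
  · rw [indicator_of_mem (show b ∈ Iic δ from (hba.trans_le haδ).le)]
    rcases hb.eq_or_lt with rfl | hb
    · simpa [lnm] using div_nonneg (lnm_nonneg a) ha.le
    · exact le_add_of_nonneg_of_le (div_nonneg (lnm_nonneg a) ha.le)
        (div_le_div_of_nonneg_left (lnm_nonneg b) hb hba.le)

lemma integrableOn_lnm_Ioc {δ : ℝ} (h1 : δ ≤ 1) : IntegrableOn lnm (Ioc 0 δ) := by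
  refine ((intervalIntegral.intervalIntegrable_log' (a := 0) (b := δ)).neg.1).congr_fun
    (fun r hr => (lnm_eq_neg_log hr.1.le (hr.2.trans h1)).symm) measurableSet_Ioc

lemma integral_lnm_of_le_one {δ : ℝ} (h0 : 0 ≤ δ) (h1 : δ ≤ 1) :
    ∫ r in 0..δ, lnm r = δ * (1 + |Real.log δ|) := by
  rw [intervalIntegral.integral_congr (g := fun r => -Real.log r), intervalIntegral.integral_neg,
    integral_log_from_zero, abs_of_nonpos (Real.log_nonpos h0 h1)]
  · ring
  · intro r hr
    rw [uIcc_of_le h0] at hr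
    exact lnm_eq_neg_log hr.1 (hr.2.trans h1)

lemma lintegral_Ioc_ofReal_add_mul_lnm {A B δ : ℝ} (hA : 0 ≤ A) (hB : 0 ≤ B) (h0 : 0 ≤ δ)
    (h1 : δ ≤ 1) :
    ∫⁻ r in Ioc 0 δ, ENNReal.ofReal (A + B * lnm r) =
      ENNReal.ofReal (A * δ + B * δ * (1 + |Real.log δ|)) := by
  have hint : IntegrableOn (fun r => A + B * lnm r) (Ioc 0 δ) :=
    (integrableOn_const measure_Ioc_lt_top.ne).add ((integrableOn_lnm_Ioc h1).const_mul B)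
  rw [← ofReal_integral_eq_lintegral_ofReal hint
    (ae_of_all _ fun r => add_nonneg hA (mul_nonneg hB (lnm_nonneg r)))]
  rw [← intervalIntegral.integral_of_le h0, intervalIntegral.integral_add,
    intervalIntegral.integral_const_mul, integral_lnm_of_le_one h0 h1]
  · congr 1
    simp only [intervalIntegral.integral_const, sub_zero, smul_eq_mul]
    ring
  · exact intervalIntegrable_const
  · exact ((intervalIntegrable_iff_integrableOn_Ioc_of_le h0).mpr
      (integrableOn_lnm_Ioc h1)).const_mul B

lemma lintegral_indicator_Iic_norm_sub {E : Type*} [SeminormedAddCommGroup E] [MeasurableSpace E]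
    [OpensMeasurableSpace E] (μ : Measure E) (f : ℝ → ℝ≥0∞) (x : E) (δ : ℝ) :
    ∫⁻ y, (Iic δ).indicator f ‖y - x‖ ∂μ = ∫⁻ y in closedBall x δ, f ‖y - x‖ ∂μ := by
  have hball : closedBall x δ = (fun y => ‖y - x‖) ⁻¹' Iic δ := by
    ext y; simp [dist_eq_norm]
  rw [← lintegral_indicator measurableSet_closedBall, hball]
  simp_rw [← indicator_comp_right]
  rfl

section Polar

variable {E : Type*} [NormedAddCommGroup E] [NormedSpace ℝ E] [FiniteDimensional ℝ E]
  [MeasurableSpace E] [BorelSpace E] [Nontrivial E] (μ : Measure E) [μ.IsAddHaarMeasure]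

lemma lintegral_fun_norm_addHaar {f : ℝ → ℝ≥0∞} (hf : Measurable f) :
    ∫⁻ x, f ‖x‖ ∂μ = Module.finrank ℝ E * μ (ball 0 1) *
      ∫⁻ r in Ioi (0 : ℝ), ENNReal.ofReal (r ^ (Module.finrank ℝ E - 1)) * f r := by
  have hf' : Measurable fun p : sphere (0 : E) 1 × Ioi (0 : ℝ) => f p.2 :=
    hf.comp (measurable_subtype_coe.comp measurable_snd)
  calc ∫⁻ x, f ‖x‖ ∂μ = ∫⁻ x : ({0}ᶜ : Set E), f ‖(x : E)‖ ∂(μ.comap (↑)) := by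
        rw [lintegral_subtype_comap (measurableSet_singleton 0).compl (fun x => f ‖x‖),
          restrict_compl_singleton]
    _ = ∫⁻ p : sphere (0 : E) 1 × Ioi (0 : ℝ), f p.2
          ∂(μ.toSphere.prod (volumeIoiPow (Module.finrank ℝ E - 1))) := by
        rw [← μ.measurePreserving_homeomorphUnitSphereProd.lintegral_comp hf']
        simp only [homeomorphUnitSphereProd_apply_snd_coe]
    _ = μ.toSphere univ * ∫⁻ r : Ioi (0 : ℝ), f r ∂(volumeIoiPow (Module.finrank ℝ E - 1)) := by
        rw [lintegral_prod _ hf'.aemeasurable]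
        simp [lintegral_const, mul_comm]
    _ = _ := by
        rw [toSphere_apply_univ, volumeIoiPow,
          lintegral_withDensity_eq_lintegral_mul _
            (f := fun r : Ioi (0 : ℝ) => ENNReal.ofReal ((r : ℝ) ^ (Module.finrank ℝ E - 1)))
            (measurable_subtype_coe.pow_const _).ennreal_ofReal
            (show Measurable fun r : Ioi (0 : ℝ) => f r from hf.comp measurable_subtype_coe),
          ← lintegral_subtype_comap measurableSet_Ioi (fun r => ENNReal.ofReal (r ^ _) * f r)]
        rfl

lemma lintegral_closedBall_fun_norm_sub {f : ℝ → ℝ≥0∞} (hf : Measurable f) (x : E) (δ : ℝ) :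
    ∫⁻ y in closedBall x δ, f ‖y - x‖ ∂μ = Module.finrank ℝ E * μ (ball 0 1) *
      ∫⁻ r in Ioc 0 δ, ENNReal.ofReal (r ^ (Module.finrank ℝ E - 1)) * f r := by
  rw [← lintegral_indicator_Iic_norm_sub,
    lintegral_sub_right_eq_self (fun y => (Iic δ).indicator f ‖y‖) x,
    lintegral_fun_norm_addHaar μ (hf.indicator measurableSet_Iic), ← Ioi_inter_Iic, inter_comm,
    ← setLIntegral_indicator measurableSet_Iic]
  simp_rw [indicator_mul_right]

end Polar

lemma lintegral_closedBall_ofReal_add_mul_lnm_div {A B δ : ℝ} (hA : 0 ≤ A) (hB : 0 ≤ B)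
    (h0 : 0 < δ) (h1 : δ ≤ 1) (x : EuclideanSpace ℝ (Fin 2)) :
    ∫⁻ y in closedBall x δ, ENNReal.ofReal ((A + B * lnm ‖y - x‖) / ‖y - x‖) =
      2 * volume (ball (0 : EuclideanSpace ℝ (Fin 2)) 1) *
        ENNReal.ofReal (A * δ + B * δ * (1 + |Real.log δ|)) := by
  have hf : Measurable fun r : ℝ => ENNReal.ofReal ((A + B * lnm r) / r) := by fun_prop
  rw [lintegral_closedBall_fun_norm_sub volume hf, finrank_euclideanSpace_fin,
    ← lintegral_Ioc_ofReal_add_mul_lnm hA hB h0.le h1, Nat.cast_ofNat]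
  congr 1
  refine setLIntegral_congr_fun measurableSet_Ioc fun r hr => ?_
  rw [pow_one, ← ENNReal.ofReal_mul hr.1.le, mul_div_cancel₀ _ hr.1.ne']

lemma ofReal_div_norm_le_add_indicator {ρ : EuclideanSpace ℝ (Fin 2) → ℝ}
    {ξ x y : EuclideanSpace ℝ (Fin 2)} {A B δ : ℝ} (hB : 0 ≤ B)
    (hbound : ∀ y, ρ y ≤ A + B * lnm ‖y - ξ‖) (hy : y ∈ closedBall x δ) :
    ENNReal.ofReal (ρ y / ‖y - x‖) ≤ ENNReal.ofReal ((A + B * lnm ‖y - x‖) / ‖y - x‖) +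
      (Iic δ).indicator (fun r => ENNReal.ofReal (B * lnm r / r)) ‖y - ξ‖ := by
  rcases eq_or_ne y x with rfl | hne
  · simp
  have ha : 0 < ‖y - x‖ := norm_pos_iff.mpr (sub_ne_zero.mpr hne)
  have haδ : ‖y - x‖ ≤ δ := by rwa [mem_closedBall, dist_eq_norm] at hy
  have key : ρ y / ‖y - x‖ ≤ (A + B * lnm ‖y - x‖) / ‖y - x‖ +
      B * (Iic δ).indicator (fun r => lnm r / r) ‖y - ξ‖ :=
    calc ρ y / ‖y - x‖ ≤ A / ‖y - x‖ + B * (lnm ‖y - ξ‖ / ‖y - x‖) := by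
          rw [mul_div_assoc', ← add_div]
          exact div_le_div_of_nonneg_right (hbound y) ha.le
      _ ≤ A / ‖y - x‖ + B * (lnm ‖y - x‖ / ‖y - x‖ +
            (Iic δ).indicator (fun r => lnm r / r) ‖y - ξ‖) := by
          gcongr
          exact lnm_div_le_add_indicator ha haδ (norm_nonneg _)
      _ = _ := by ring
  refine (ENNReal.ofReal_le_ofReal key).trans (ENNReal.ofReal_add_le.trans_eq ?_)
  by_cases hb : ‖y - ξ‖ ∈ Iic δ <;> simp [hb, mul_div_assoc]

theorem lintegral_closedBall_div_norm_le {ρ : EuclideanSpace ℝ (Fin 2) → ℝ}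
    {ξ : EuclideanSpace ℝ (Fin 2)} {A B δ : ℝ} (hA : 0 ≤ A) (hB : 0 ≤ B)
    (hbound : ∀ y, ρ y ≤ A + B * lnm ‖y - ξ‖) (h0 : 0 < δ) (h1 : δ ≤ 1)
    (x : EuclideanSpace ℝ (Fin 2)) :
    ∫⁻ y in closedBall x δ, ENNReal.ofReal (ρ y / ‖y - x‖) ≤
      4 * volume (ball (0 : EuclideanSpace ℝ (Fin 2)) 1) *
        ENNReal.ofReal (A * δ + B * δ * (1 + |Real.log δ|)) := by
  set V := volume (ball (0 : EuclideanSpace ℝ (Fin 2)) 1)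
  set M := A * δ + B * δ * (1 + |Real.log δ|)
  have near_ξ : ∫⁻ y, (Iic δ).indicator (fun r => ENNReal.ofReal (B * lnm r / r)) ‖y - ξ‖ ≤
      2 * V * ENNReal.ofReal M := by
    have h := lintegral_closedBall_ofReal_add_mul_lnm_div le_rfl hB h0 h1 ξ
    simp only [zero_add, zero_mul] at h
    rw [lintegral_indicator_Iic_norm_sub, h]
    gcongr
    exact le_add_of_nonneg_left (mul_nonneg hA h0.le)
  have hmeas_x : Measurable fun y => ENNReal.ofReal ((A + B * lnm ‖y - x‖) / ‖y - x‖) := by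
    fun_prop
  have hmeas_ξ : Measurable fun y =>
      (Iic δ).indicator (fun r => ENNReal.ofReal (B * lnm r / r)) ‖y - ξ‖ := by
    fun_prop (disch := exact measurableSet_Iic)
  calc ∫⁻ y in closedBall x δ, ENNReal.ofReal (ρ y / ‖y - x‖)
      ≤ ∫⁻ y in closedBall x δ, (ENNReal.ofReal ((A + B * lnm ‖y - x‖) / ‖y - x‖) +
          (Iic δ).indicator (fun r => ENNReal.ofReal (B * lnm r / r)) ‖y - ξ‖) :=
        setLIntegral_mono (hmeas_x.add hmeas_ξ) fun y hy =>
          ofReal_div_norm_le_add_indicator hB hbound hy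
    _ ≤ 2 * V * ENNReal.ofReal M + 2 * V * ENNReal.ofReal M := by
        rw [lintegral_add_left hmeas_x, lintegral_closedBall_ofReal_add_mul_lnm_div hA hB h0 h1]
        exact add_le_add_right ((setLIntegral_le_lintegral _ _).trans near_ξ) _
    _ = 4 * V * ENNReal.ofReal M := by ring

theorem coulomb_kernel_bound_log_density :
    ∃ C > 0, ∀ (ρ : EuclideanSpace ℝ (Fin 2) → ℝ) (ξ : EuclideanSpace ℝ (Fin 2))
      (A B : ℝ), Measurable ρ → (∀ x, 0 ≤ ρ x) → 0 ≤ A → 0 ≤ B →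
      (∀ x, ρ x ≤ A + B * lnm ‖x - ξ‖) →
      ∀ (x : EuclideanSpace ℝ (Fin 2)) (δ : ℝ), 0 < δ → δ < 1 →
        ∫ y in Metric.closedBall x δ, ρ y / ‖x - y‖ ≤
          C * (A * δ + B * δ * (1 + |Real.log δ|)) := by
  set V := volume (ball (0 : EuclideanSpace ℝ (Fin 2)) 1)
  have hV : V ≠ ∞ := measure_ball_lt_top.ne
  have hV0 : V ≠ 0 := (measure_ball_pos _ _ one_pos).ne'
  refine ⟨4 * V.toReal, mul_pos four_pos (ENNReal.toReal_pos hV0 hV), ?_⟩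
  intro ρ ξ A B hρ hρ_nonneg hA hB hbound x δ h0 h1
  simp_rw [norm_sub_rev x]
  rw [integral_eq_lintegral_of_nonneg_ae
    (ae_of_all _ fun y => div_nonneg (hρ_nonneg y) (norm_nonneg _))
    (hρ.div (by fun_prop)).aestronglyMeasurable]
  refine ENNReal.toReal_le_of_le_ofReal (by positivity)
    ((lintegral_closedBall_div_norm_le hA hB hbound h0 h1.le x).trans_eq ?_)
  rw [ENNReal.ofReal_mul (by positivity), ENNReal.ofReal_mul zero_le_four,
    ENNReal.ofReal_toReal hV, ENNReal.ofReal_ofNat]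
end

section
/- Let γ(r) = r(2 + ln_− r)² for 0 ≤ r ≤ 1 and γ(r) = 4 for r > 1. Then γ is continuous, nondecreasing, and concave on [0,∞). -/
noncomputable def gam (r : ℝ) : ℝ := if r ≤ 1 then r * (2 + lnm r) ^ 2 else 4

open Real Set

lemma mul_two_sub_log_sq_eq_sqrt {r : ℝ} (hr : 0 ≤ r) :
    r * (2 - log r) ^ 2 = 4 * (√r - √r * log √r) ^ 2 := by
  rw [log_sqrt hr]
  linear_combination (2 - log r) ^ 2 * (sq_sqrt hr).symm

lemma continuousOn_mul_two_sub_log_sq :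
    ContinuousOn (fun r : ℝ => r * (2 - log r) ^ 2) (Ici 0) :=
  (continuous_const.mul ((continuous_sqrt.sub continuous_sqrt.mul_log).pow 2)).continuousOn.congr
    fun _ hr => mul_two_sub_log_sq_eq_sqrt hr

lemma hasDerivAt_mul_two_sub_log_sq {x : ℝ} (hx : x ≠ 0) :
    HasDerivAt (fun r : ℝ => r * (2 - log r) ^ 2) (log x * (log x - 2)) x := by
  refine ((hasDerivAt_id' x).fun_mul (((hasDerivAt_log hx).const_sub 2).fun_pow 2)).congr_deriv ?_
  field_simp
  ring

lemma monotoneOn_mul_two_sub_log_sq :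
    MonotoneOn (fun r : ℝ => r * (2 - log r) ^ 2) (Icc 0 1) := by
  refine monotoneOn_of_deriv_nonneg (convex_Icc 0 1)
    (continuousOn_mul_two_sub_log_sq.mono Icc_subset_Ici_self) ?_ ?_ <;> rw [interior_Icc]
  · exact fun x hx =>
      (hasDerivAt_mul_two_sub_log_sq hx.1.ne').differentiableAt.differentiableWithinAt
  · intro x hx
    rw [(hasDerivAt_mul_two_sub_log_sq hx.1.ne').deriv]
    have hlog : log x ≤ 0 := log_nonpos hx.1.le hx.2.le
    nlinarith

lemma concaveOn_mul_two_sub_log_sq :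
    ConcaveOn ℝ (Icc 0 (exp 1)) (fun r : ℝ => r * (2 - log r) ^ 2) := by
  refine AntitoneOn.concaveOn_of_deriv (convex_Icc 0 _)
    (continuousOn_mul_two_sub_log_sq.mono Icc_subset_Ici_self) ?_ ?_ <;> rw [interior_Icc]
  · exact fun x hx =>
      (hasDerivAt_mul_two_sub_log_sq hx.1.ne').differentiableAt.differentiableWithinAt
  · intro x hx y hy hxy
    rw [(hasDerivAt_mul_two_sub_log_sq hx.1.ne').deriv,
      (hasDerivAt_mul_two_sub_log_sq hy.1.ne').deriv]
    have hlog : log x ≤ log y := log_le_log hx.1 hxy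
    have hlog_le_one : log y ≤ 1 := (log_le_iff_le_exp hy.1).2 hy.2.le
    nlinarith

lemma mapsTo_min_Ici_Icc {α : Type*} [LinearOrder α] {a b : α} (hab : a ≤ b) :
    MapsTo (fun x => min x b) (Ici a) (Icc a b) :=
  fun _ hx => ⟨le_min hx hab, min_le_right _ _⟩

lemma image_min_Ici {α : Type*} [LinearOrder α] {a b : α} (hab : a ≤ b) :
    (fun x => min x b) '' Ici a = Icc a b :=
  (mapsTo_min_Ici_Icc hab).image_subset.antisymm fun x hx => ⟨x, hx.1, min_eq_left hx.2⟩

lemma gam_eq_mul_two_sub_log_sq_min {r : ℝ} (hr : 0 ≤ r) :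
    gam r = min r 1 * (2 - log (min r 1)) ^ 2 := by
  unfold gam lnm
  split_ifs with h
  · rw [min_eq_left h, max_eq_left (neg_nonneg.2 (log_nonpos hr h))]
    ring
  · rw [min_eq_right (not_le.1 h).le]
    norm_num

theorem gam_continuous_monotone_concave :
    ContinuousOn gam (Set.Ici 0) ∧ MonotoneOn gam (Set.Ici 0) ∧
      ConcaveOn ℝ (Set.Ici 0) gam := by
  have hgam : EqOn (fun r => min r 1 * (2 - log (min r 1)) ^ 2) gam (Ici 0) :=
    fun r hr => (gam_eq_mul_two_sub_log_sq_min hr).symm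
  have hmaps := mapsTo_min_Ici_Icc (zero_le_one' ℝ)
  have hmin : ConcaveOn ℝ (Ici 0) (fun r : ℝ => min r 1) :=
    (concaveOn_id (convex_Ici 0)).inf (concaveOn_const 1 (convex_Ici 0))
  have hconc := concaveOn_mul_two_sub_log_sq.subset
    (Icc_subset_Icc_right (one_le_exp zero_le_one)) (convex_Icc 0 1)
  have hmono := monotoneOn_mul_two_sub_log_sq
  refine ⟨?_, ?_, ?_⟩
  · exact ((continuousOn_mul_two_sub_log_sq.mono Icc_subset_Ici_self).comp
      (continuous_id.min continuous_const).continuousOn hmaps).congr hgam.symm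
  · exact (hmono.comp (fun _ _ _ _ h => min_le_min_right 1 h) hmaps).congr hgam
  · rw [← image_min_Ici (zero_le_one' ℝ)] at hconc hmono
    exact (hconc.comp hmin hmono).congr hgam
end

section
/- Let v : [0,T] → (0,1) be continuously differentiable with v'(t) ≤ 2√a · v(t)(1 − ln v(t)) and v(0) = b ∈ (0,1). Then v(t) ≤ exp(1 − e^{−2t√a}) · b^{exp(−2t√a)} for all t ∈ [0,T]. -/
/-!
With `y = 1 - log v` the inequality `v' ≤ k v (1 - log v)` becomes the linear one `y' ≥ -k y`,
so `y(t) e^{kt}` is nondecreasing and `1 - log v(t) ≥ (1 - log b) e^{-kt}`; exponentiating gives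
the bound.
-/

open Real Set

section

variable {D : Set ℝ} {y y' : ℝ → ℝ} {k : ℝ}

theorem monotoneOn_mul_exp_of_neg_mul_le_deriv (hD : Convex ℝ D)
    (hy : ∀ t ∈ D, HasDerivAt y (y' t) t) (hle : ∀ t ∈ D, -k * y t ≤ y' t) :
    MonotoneOn (fun t => y t * exp (k * t)) D := by
  have hderiv : ∀ t ∈ D,
      HasDerivAt (fun t => y t * exp (k * t)) ((y' t + k * y t) * exp (k * t)) t := by
    intro t ht
    have hexp : HasDerivAt (fun t => exp (k * t)) (exp (k * t) * k) t :=
      ((hasDerivAt_id t).const_mul k).exp.congr_deriv (by simp)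
    exact ((hy t ht).mul hexp).congr_deriv (by ring)
  refine monotoneOn_of_hasDerivWithinAt_nonneg hD
    (fun t ht => (hderiv t ht).continuousAt.continuousWithinAt)
    (fun t ht => (hderiv t (interior_subset ht)).hasDerivWithinAt) fun t ht => ?_
  have := hle t (interior_subset ht)
  exact mul_nonneg (by linarith) (exp_pos _).le

theorem mul_exp_le_of_neg_mul_le_deriv (hD : Convex ℝ D)
    (hy : ∀ t ∈ D, HasDerivAt y (y' t) t) (hle : ∀ t ∈ D, -k * y t ≤ y' t)
    {s t : ℝ} (hs : s ∈ D) (ht : t ∈ D) (hst : s ≤ t) :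
    y s * exp (-(k * (t - s))) ≤ y t := by
  have hmono := monotoneOn_mul_exp_of_neg_mul_le_deriv hD hy hle hs ht hst
  calc y s * exp (-(k * (t - s)))
      = y s * exp (k * s) * exp (-(k * t)) := by rw [mul_assoc, ← exp_add]; ring_nf
    _ ≤ y t * exp (k * t) * exp (-(k * t)) := mul_le_mul_of_nonneg_right hmono (exp_pos _).le
    _ = y t := by rw [mul_assoc, ← exp_add, add_neg_cancel, exp_zero, mul_one]

end

theorem le_exp_mul_rpow_of_deriv_le_mul_one_sub_log {D : Set ℝ} (hD : Convex ℝ D)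
    {v v' : ℝ → ℝ} {k : ℝ} (hpos : ∀ t ∈ D, 0 < v t) (hv : ∀ t ∈ D, HasDerivAt v (v' t) t)
    (hle : ∀ t ∈ D, v' t ≤ k * (v t * (1 - log (v t))))
    {s t : ℝ} (hs : s ∈ D) (ht : t ∈ D) (hst : s ≤ t) :
    v t ≤ exp (1 - exp (-(k * (t - s)))) * v s ^ exp (-(k * (t - s))) := by
  have hy : ∀ t ∈ D, HasDerivAt (fun t => 1 - log (v t)) (-(v' t / v t)) t := fun t ht =>
    ((hv t ht).log (hpos t ht).ne').const_sub 1
  have hy_le : ∀ t ∈ D, -k * (1 - log (v t)) ≤ -(v' t / v t) := by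
    intro t ht
    rw [neg_mul, neg_le_neg_iff, div_le_iff₀ (hpos t ht)]
    linarith [hle t ht]
  have hlog := mul_exp_le_of_neg_mul_le_deriv hD hy hy_le hs ht hst
  set E := exp (-(k * (t - s)))
  calc v t = exp (log (v t)) := (exp_log (hpos t ht)).symm
    _ ≤ exp ((1 - E) + log (v s) * E) := exp_le_exp.mpr (by linarith)
    _ = exp (1 - E) * v s ^ E := by rw [exp_add, rpow_def_of_pos (hpos s hs)]

theorem osgood_first_order_general (a b T : ℝ)
    (v v' : ℝ → ℝ)
    (hrange : ∀ t ∈ Set.Icc (0:ℝ) T, 0 < v t ∧ v t < 1)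
    (hv0 : v 0 = b)
    (hderiv : ∀ t ∈ Set.Icc (0:ℝ) T, HasDerivAt v (v' t) t)
    (hineq : ∀ t ∈ Set.Icc (0:ℝ) T,
      v' t ≤ 2 * Real.sqrt a * (v t * (1 - Real.log (v t)))) :
    ∀ t ∈ Set.Icc (0:ℝ) T,
      v t ≤ Real.exp (1 - Real.exp (-2 * t * Real.sqrt a)) *
        b ^ Real.exp (-2 * t * Real.sqrt a) := by
  intro t ht
  have h := le_exp_mul_rpow_of_deriv_le_mul_one_sub_log (convex_Icc 0 T)
    (fun t ht => (hrange t ht).1) hderiv hineq ⟨le_rfl, ht.1.trans ht.2⟩ ht ht.1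
  rwa [hv0, sub_zero, show -(2 * √a * t) = -2 * t * √a by ring] at h

theorem osgood_first_order (a b T : ℝ) (ha : 0 < a) (hb0 : 0 < b) (hb1 : b < 1)
    (v v' : ℝ → ℝ)
    (hrange : ∀ t ∈ Set.Icc (0:ℝ) T, 0 < v t ∧ v t < 1)
    (hv0 : v 0 = b)
    (hderiv : ∀ t ∈ Set.Icc (0:ℝ) T, HasDerivAt v (v' t) t)
    (hineq : ∀ t ∈ Set.Icc (0:ℝ) T,
      v' t ≤ 2 * Real.sqrt a * (v t * (1 - Real.log (v t)))) :
    ∀ t ∈ Set.Icc (0:ℝ) T,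
      v t ≤ Real.exp (1 - Real.exp (-2 * t * Real.sqrt a)) *
        b ^ Real.exp (-2 * t * Real.sqrt a) :=
  osgood_first_order_general a b T v v' hrange hv0 hderiv hineq
end
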